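/- arXiv:2006.11753 — 6 statements merged into one kernel-verified Lean document; each statement's English description precedes it below -/
import Mathlib

section
/- Let x, y, z be positive integers satisfying x² + y² + z² = xyz with z ≤ y < x and (x,y,z) ≠ (3,3,3). Then yz - x < x, i.e., the Vièta transformation replacing the maximal coordinate x by yz - x strictly decreases the maximum of the triple. -/
/-- For a positive integer solution of `x² + y² + z² = xyz` with `z ≤ y < x`, different from
`(3,3,3)`, the Vièta transformation on the maximal coordinate decreases the maximum:
`yz - x < x`. -/
theorem markov_viete_decreases (x y z : ℤ) (hx : 0 < x) (hy : 0 < y) (hz : 0 < z)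
    (h : x ^ 2 + y ^ 2 + z ^ 2 = x * y * z) (hzy : z ≤ y) (hyx : y < x)
    (hne : ¬ (x = 3 ∧ y = 3 ∧ z = 3)) :
    y * z - x < x := by
  rcases lt_or_ge z 3 with h3 | h3
  · interval_cases z
    · nlinarith [sq_nonneg (x - y)]
    · nlinarith [sq_nonneg (x - y)]
  · -- z ≥ 3
    rcases lt_or_ge 3 y with hy3 | hy3
    · -- f(y) = 2y²+z²-y²z < 0 since y > 3, z ≥ 3, z ≤ y
      have hf : 2 * y ^ 2 + z ^ 2 - y ^ 2 * z < 0 := by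
        rcases eq_or_lt_of_le h3 with rfl | h4
        · nlinarith
        · nlinarith [mul_le_mul_of_nonneg_left (sq_le_sq' (by linarith) hzy) (le_of_lt (by linarith : (0:ℤ) < z - 3))]
      -- (y - x) * (y - (y*z - x)) = f(y) < 0, and y - x < 0
      nlinarith [mul_pos (sub_pos.mpr hyx) (sub_pos.mpr hyx)]
    · -- y ≤ 3 and z ≥ 3 and z ≤ y force y = z = 3
      have hy3' : y = 3 := le_antisymm hy3 (le_trans h3 hzy)
      have hz3 : z = 3 := le_antisymm (hy3' ▸ hzy) h3
      subst hy3' hz3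
      have hx3 : x ≠ 3 := fun hh => hne ⟨hh, rfl, rfl⟩
      have : (x - 3) * (x - 6) = 0 := by ring_nf; ring_nf at h; linarith
      rcases mul_eq_zero.mp this with h6 | h6
      · omega
      · omega
end

section
/- Let x, y, z be positive integers satisfying x² + y² + z² = xyz with z ≤ y < x. Then xz - y > x and xy - z > x, i.e., the Vièta transformations applied to the non-maximal coordinates strictly increase the maximum of the triple. -/
/-- For a positive integer solution of `x² + y² + z² = xyz` with `z ≤ y < x`, the Vièta
transformations on the non-maximal coordinates increase the maximum: `xz - y > x` and
`xy - z > x`. -/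
theorem markov_viete_increases (x y z : ℤ) (hx : 0 < x) (hy : 0 < y) (hz : 0 < z)
    (h : x ^ 2 + y ^ 2 + z ^ 2 = x * y * z) (hzy : z ≤ y) (hyx : y < x) :
    x * z - y > x ∧ x * y - z > x := by
  constructor
  · -- (x*z - y)*y = x^2 + z^2 > x*y since y < x
    have key : (x * z - y) * y = x ^ 2 + z ^ 2 := by ring_nf; nlinarith [h]
    nlinarith [sq_nonneg z, mul_pos hx hy]
  · have key : (x * y - z) * z = x ^ 2 + y ^ 2 := by ring_nf; nlinarith [h]
    nlinarith [sq_nonneg y, mul_pos hx hz, mul_lt_mul_of_pos_left hyx hx, mul_le_mul_of_nonneg_left hzy hx.le]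
end

section
/- If (a,b,c) is a solution of the *-Markov equation a·a* + b·b* + c·c* - abc = (3s₁s₂ - s₁³)/s₃ in ℤ[s₁,s₂,s₃^{±1}], then (-a*, c*, b* - ac) is also a solution of the same equation. -/
open MvPolynomial

noncomputable section

/-- The polynomial ring `ℤ[s₁,s₂,s₃]`. -/
abbrev A3 := MvPolynomial (Fin 3) ℤ

def S1 : A3 := X 0
def S2 : A3 := X 1
def S3 : A3 := X 2

/-- The Laurent ring `ℤ[s₁,s₂,s₃^{±1}]`, polynomial in `s₁,s₂`, Laurent in `s₃`. -/
abbrev LP := Localization.Away S3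

def ι : A3 →+* LP := algebraMap A3 LP

def s₁ : LP := ι S1
def s₂ : LP := ι S2
def s₃ : LP := ι S3
/-- `s₃⁻¹`. -/
def s₃' : LP := IsLocalization.Away.invSelf S3

lemma s₃_mul_s₃' : s₃ * s₃' = 1 := IsLocalization.Away.mul_invSelf S3

/-- The `*`-involution `f ↦ f*`, determined by `s₁ ↦ s₂/s₃`, `s₂ ↦ s₁/s₃`, `s₃ ↦ 1/s₃`. -/
def starMap : LP →+* LP :=
  IsLocalization.Away.lift
    (g := eval₂Hom (Int.castRingHom LP) ![s₂ * s₃', s₁ * s₃', s₃']) S3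
    (by
      have h : (eval₂Hom (Int.castRingHom LP) ![s₂ * s₃', s₁ * s₃', s₃']) S3 = s₃' := by
        simp [S3]
      rw [h]
      exact ⟨⟨_, s₃, (by rw [mul_comm]; exact s₃_mul_s₃'), s₃_mul_s₃'⟩, rfl⟩)
/-! The move `(a, b, c) ↦ (-a*, c*, b* - ac)` preserves `a·a* + b·b* + c·c* - abc` over any
commutative ring whose `*` is an involutive ring endomorphism; so it suffices to check that
`starMap` is involutive, which is done on the generators `s₁, s₂, s₃` of the localization. -/

section MarkovForm

variable {R : Type*} [CommRing R]

def markovForm (σ : R →+* R) (a b c : R) : R :=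
  a * σ a + b * σ b + c * σ c - a * b * c

theorem markovForm_tau1 {σ : R →+* R} (hσ : ∀ x, σ (σ x) = x) (a b c : R) :
    markovForm σ (-σ a) (σ c) (σ b - a * c) = markovForm σ a b c := by
  simp only [markovForm, map_neg, map_sub, map_mul, hσ]
  ring

end MarkovForm

lemma starMap_ι (p : A3) :
    starMap (ι p) = eval₂Hom (Int.castRingHom LP) ![s₂ * s₃', s₁ * s₃', s₃'] p :=
  IsLocalization.Away.lift_eq _ _ p

lemma starMap_s₁ : starMap s₁ = s₂ * s₃' := by
  simp [s₁, starMap_ι, S1]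

lemma starMap_s₂ : starMap s₂ = s₁ * s₃' := by
  simp [s₂, starMap_ι, S2]

lemma starMap_s₃ : starMap s₃ = s₃' := by
  simp [s₃, starMap_ι, S3]

lemma starMap_s₃' : starMap s₃' = s₃ := by
  refine left_inv_eq_right_inv (a := s₃') ?_ (by rw [mul_comm, s₃_mul_s₃'])
  rw [← map_one starMap, ← s₃_mul_s₃', map_mul, starMap_s₃, mul_comm]

lemma starMap_starMap_ι (p : A3) : starMap (starMap (ι p)) = ι p := by
  show (starMap.comp starMap).comp ι p = ι p
  congr 1
  refine MvPolynomial.ringHom_ext (fun n ↦ by simp) fun i ↦ ?_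
  fin_cases i
  · show starMap (starMap s₁) = s₁
    rw [starMap_s₁, map_mul, starMap_s₂, starMap_s₃', mul_assoc, mul_comm s₃', s₃_mul_s₃', mul_one]
  · show starMap (starMap s₂) = s₂
    rw [starMap_s₂, map_mul, starMap_s₁, starMap_s₃', mul_assoc, mul_comm s₃', s₃_mul_s₃', mul_one]
  · show starMap (starMap s₃) = s₃
    rw [starMap_s₃, starMap_s₃']

lemma starMap_starMap (x : LP) : starMap (starMap x) = x := by
  have : starMap.comp starMap = RingHom.id LP :=
    IsLocalization.ringHom_ext (Submonoid.powers S3) (RingHom.ext starMap_starMap_ι)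
  exact DFunLike.congr_fun this x

/-- If `(a,b,c)` solves the `*`-Markov equation, then so does `(-a*, c*, b* - ac)`. -/
theorem starMarkov_tau1 (a b c : LP)
    (h : a * starMap a + b * starMap b + c * starMap c - a * b * c
        = (3 * s₁ * s₂ - s₁ ^ 3) * s₃') :
    (-(starMap a)) * starMap (-(starMap a)) + (starMap c) * starMap (starMap c)
        + (starMap b - a * c) * starMap (starMap b - a * c)
        - (-(starMap a)) * (starMap c) * (starMap b - a * c)
      = (3 * s₁ * s₂ - s₁ ^ 3) * s₃' :=
  (markovForm_tau1 starMap_starMap a b c).trans h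
end
end

section
/- The odd *-Fibonacci polynomials satisfy, for n ≥ 0: F_{4n+1} = s₁·Σ_{i=0}^{n} C(2n-i, i)·(-s₃)^i·(s₁s₂)^{n-i} - s₂·Σ_{i=0}^{n-1} C(2n-1-i, i)·(-s₃)^i·s₁^{n-1-i}·s₂^{n-i}. -/
open MvPolynomial

noncomputable section

/-- `g n = s₂` if `n` is odd, `s₁` if `n` is even. -/
def g (n : ℕ) : A3 := if n % 2 = 1 then S2 else S1

/-- The odd `*`-Fibonacci polynomials: `starFib n = F_{2n+1}`, with `F₁ = s₁`,
`F₃ = s₁² - s₂`, `F_{4n+3} = s₁ F_{4n+1} - s₃ F_{4n-1}`,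
`F_{4n+5} = s₂ F_{4n+3} - s₃ F_{4n+1}` (i.e. `F_{2n+3} = g_n F_{2n+1} - s₃ F_{2n-1}`). -/
def starFib : ℕ → A3
  | 0 => S1
  | 1 => S1 ^ 2 - S2
  | (n + 2) => g (n + 1) * starFib (n + 1) - S3 * starFib n

def sA (n : ℕ) : A3 :=
  ∑ i ∈ Finset.range (n + 1),
    (Nat.choose (2 * n - i) i : A3) * (-S3) ^ i * (S1 * S2) ^ (n - i)

def sB (n : ℕ) : A3 :=
  ∑ i ∈ Finset.range n,
    (Nat.choose (2 * n - 1 - i) i : A3) * (-S3) ^ i * (S1 * S2) ^ (n - 1 - i)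

lemma L1 (n : ℕ) : sB (n + 1) = sA n - S3 * sB n := by
  unfold sB sA
  rw [Finset.sum_range_succ', Finset.sum_range_succ', Finset.mul_sum]
  have h : ∀ j ∈ Finset.range n,
      (Nat.choose (2 * (n+1) - 1 - (j+1)) (j+1) : A3) * (-S3) ^ (j+1) * (S1*S2) ^ ((n+1) - 1 - (j+1))
      = (Nat.choose (2 * n - (j+1)) (j+1) : A3) * (-S3) ^ (j+1) * (S1*S2) ^ (n - (j+1))
        - S3 * ((Nat.choose (2 * n - 1 - j) j : A3) * (-S3) ^ j * (S1*S2) ^ (n - 1 - j)) := by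
    intro j hj
    rw [Finset.mem_range] at hj
    have h1 : 2 * (n+1) - 1 - (j+1) = (2*n - 1 - j) + 1 := by omega
    have h2 : 2 * n - (j+1) = 2*n - 1 - j := by omega
    have h3 : (n+1) - 1 - (j+1) = n - 1 - j := by omega
    have h4 : n - (j+1) = n - 1 - j := by omega
    rw [h1, h2, h3, h4, Nat.choose_succ_succ]
    push_cast
    ring
  rw [Finset.sum_congr rfl h, Finset.sum_sub_distrib]
  simp
  ring

lemma L2 (n : ℕ) : sA (n + 1) = (S1 * S2) * sB (n + 1) - S3 * sA n := by
  unfold sA sB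
  rw [Finset.sum_range_succ', Finset.mul_sum, Finset.mul_sum]
  set E : ℕ → A3 := fun j =>
    (Nat.choose (2 * n + 1 - j) j : A3) * (-S3) ^ j * (S1 * S2) ^ (n + 1 - j) with hE
  have h : ∀ j ∈ Finset.range (n + 1),
      (Nat.choose (2 * (n+1) - (j+1)) (j+1) : A3) * (-S3) ^ (j+1) * (S1*S2) ^ ((n+1) - (j+1))
      = ((S1*S2) * ((Nat.choose (2 * (n+1) - 1 - j) j : A3) * (-S3) ^ j * (S1*S2) ^ ((n+1) - 1 - j))
        - S3 * ((Nat.choose (2 * n - j) j : A3) * (-S3) ^ j * (S1*S2) ^ (n - j)))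
        + (E (j+1) - E j) := by
    intro j hj
    rw [Finset.mem_range] at hj
    have h1 : 2 * (n+1) - (j+1) = (2*n - j) + 1 := by omega
    have h2 : (n+1) - (j+1) = n - j := by omega
    have h3 : 2 * (n+1) - 1 - j = 2*n + 1 - j := by omega
    have h4 : (n+1) - 1 - j = n - j := by omega
    have h5 : 2*n + 1 - (j+1) = 2*n - j := by omega
    have h6 : (n+1) - j = (n - j) + 1 := by omega
    have h7 : 2*n + 1 - j = (2*n - j) + 1 := by omega
    rw [hE]
    simp only [h1, h2, h3, h4, h5, h6, h7, Nat.choose_succ_succ]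
    push_cast
    ring
  rw [Finset.sum_congr rfl h, Finset.sum_add_distrib, Finset.sum_sub_distrib,
    Finset.sum_range_sub]
  have hEtop : E (n + 1) = 0 := by
    have hz : (2 * n - n).choose (n + 1) = 0 :=
      Nat.choose_eq_zero_of_lt (by omega)
    simp [hE, hz]
  have hE0 : E 0 = (S1 * S2) ^ (n + 1) := by simp [hE]
  rw [hEtop, hE0]
  simp


lemma g_odd (n : ℕ) : g (2 * n + 1) = S2 := by
  have : (2 * n + 1) % 2 = 1 := by omega
  simp [g, this]

lemma g_even (n : ℕ) : g (2 * n + 2) = S1 := by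
  have : (2 * n + 2) % 2 = 0 := by omega
  simp [g, this]

lemma sA_zero : sA 0 = 1 := by simp [sA]

lemma sB_zero : sB 0 = 0 := by simp [sB]

lemma key (n : ℕ) :
    starFib (2 * n) = S1 * sA n - S2 ^ 2 * sB n ∧
    starFib (2 * n + 1) = S1 ^ 2 * sB (n + 1) - S2 * sA n := by
  induction n with
  | zero =>
      constructor
      · simp [starFib, sA_zero, sB_zero]
      · have h1 : sB 1 = 1 := by simp [sB]
        simp [starFib, sA_zero, h1]
  | succ n ih =>
      obtain ⟨h1, h2⟩ := ih
      have e1 : starFib (2 * (n + 1)) = g (2 * n + 1) * starFib (2 * n + 1) - S3 * starFib (2 * n) := by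
        have : 2 * (n + 1) = (2 * n) + 2 := by ring
        rw [this, starFib]
      have e2 : starFib (2 * (n + 1) + 1) = g (2 * n + 2) * starFib (2 * (n + 1)) - S3 * starFib (2 * n + 1) := by
        have h3 : 2 * (n + 1) + 1 = (2 * n + 1) + 2 := by ring
        have h4 : 2 * n + 1 + 1 = 2 * (n + 1) := by ring
        rw [h3, starFib, h4]
      constructor
      · rw [e1, g_odd, h1, h2, L2, L1]
        ring
      · rw [e2, g_even, e1, g_odd, h1, h2, L1 (n+1), L2 n, L1 n]
        ring

/-- Explicit formula for `F_{4n+1}`. -/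
theorem starFib_formula_4n1 (n : ℕ) :
    starFib (2 * n) =
      S1 * ∑ i ∈ Finset.range (n + 1),
          (Nat.choose (2 * n - i) i : A3) * (-S3) ^ i * (S1 * S2) ^ (n - i)
      - S2 * ∑ i ∈ Finset.range n,
          (Nat.choose (2 * n - 1 - i) i : A3) * (-S3) ^ i * S1 ^ (n - 1 - i) * S2 ^ (n - i) := by
  have h := (key n).1
  rw [h]
  unfold sA sB
  congr 1
  rw [Finset.mul_sum, Finset.mul_sum]
  apply Finset.sum_congr rfl
  intro i hi
  rw [Finset.mem_range] at hi
  have h1 : n - i = (n - 1 - i) + 1 := by omega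
  rw [h1, mul_pow, pow_succ]
  ring
end
end

section
/- The Fibonacci numbers satisfy φ_{4n+4} = Σ_{i=0}^{n} C(2n+1-i, i)·(-1)^i·3^{2n+1-2i} for all n ≥ 0. -/
private def S (m : ℕ) : ℤ :=
  ∑ i ∈ Finset.range (m + 1), (Nat.choose (m - i) i : ℤ) * (-1) ^ i * 3 ^ (m - 2 * i)

private lemma S_rec (m : ℕ) : S (m + 2) = 3 * S (m + 1) - S m := by
  have h1 : S (m + 2) =
      (∑ j ∈ Finset.range (m + 2),
        (Nat.choose (m + 1 - j) (j + 1) : ℤ) * (-1) ^ (j + 1) * 3 ^ (m - 2 * j)) + 3 ^ (m + 2) := by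
    rw [S, Finset.sum_range_succ']
    congr 1
    · apply Finset.sum_congr rfl
      intro j _
      have e1 : m + 2 - (j + 1) = m + 1 - j := by omega
      have e2 : m + 2 - 2 * (j + 1) = m - 2 * j := by omega
      rw [e1, e2]
    · simp
  have h2 : ∀ j, (Nat.choose (m + 1 - j) (j + 1) : ℤ) =
      Nat.choose (m - j) j + Nat.choose (m - j) (j + 1) := by
    intro j
    by_cases hj : j ≤ m
    · have e : m + 1 - j = (m - j) + 1 := by omega
      rw [e, Nat.choose_succ_succ]
      push_cast; ring
    · have e1 : m + 1 - j = 0 := by omega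
      have e2 : m - j = 0 := by omega
      rw [e1, e2,
        Nat.choose_eq_zero_of_lt (by omega : (0:ℕ) < j),
        Nat.choose_eq_zero_of_lt (by omega : (0:ℕ) < j + 1)]
      simp
  have h3 : (∑ j ∈ Finset.range (m + 2),
        (Nat.choose (m + 1 - j) (j + 1) : ℤ) * (-1) ^ (j + 1) * 3 ^ (m - 2 * j)) =
      (∑ j ∈ Finset.range (m + 2),
        (Nat.choose (m - j) (j + 1) : ℤ) * (-1) ^ (j + 1) * 3 ^ (m - 2 * j)) - S m := by
    rw [S]
    have hext : (∑ j ∈ Finset.range (m + 2), (Nat.choose (m - j) j : ℤ) * (-1) ^ j * 3 ^ (m - 2 * j)) =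
        ∑ i ∈ Finset.range (m + 1), (Nat.choose (m - i) i : ℤ) * (-1) ^ i * 3 ^ (m - 2 * i) := by
      rw [Finset.sum_range_succ]
      have e : m - (m + 1) = 0 := by omega
      rw [e, Nat.choose_eq_zero_of_lt (by omega : (0:ℕ) < m + 1)]
      simp
    rw [← hext, ← Finset.sum_sub_distrib]
    apply Finset.sum_congr rfl
    intro j _
    rw [h2 j]
    ring
  have h4 : 3 * S (m + 1) =
      (∑ j ∈ Finset.range (m + 2),
        (Nat.choose (m - j) (j + 1) : ℤ) * (-1) ^ (j + 1) * 3 ^ (m - 2 * j)) + 3 ^ (m + 2) := by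
    have hY : (∑ j ∈ Finset.range (m + 2),
        (Nat.choose (m - j) (j + 1) : ℤ) * (-1) ^ (j + 1) * 3 ^ (m - 2 * j)) =
        ∑ j ∈ Finset.range (m + 1),
          (Nat.choose (m - j) (j + 1) : ℤ) * (-1) ^ (j + 1) * 3 ^ (m - 2 * j) := by
      rw [Finset.sum_range_succ]
      have e : m - (m + 1) = 0 := by omega
      rw [e, Nat.choose_eq_zero_of_lt (by omega : 0 < m + 2)]
      push_cast; ring
    rw [hY, S, Finset.mul_sum, Finset.sum_range_succ']
    congr 1
    · apply Finset.sum_congr rfl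
      intro j _
      have e1 : m + 1 - (j + 1) = m - j := by omega
      rw [e1]
      by_cases hj : 2 * j + 1 ≤ m
      · have e2 : m + 1 - 2 * (j + 1) = m - 1 - 2 * j := by omega
        have e3 : m - 2 * j = (m - 1 - 2 * j) + 1 := by omega
        rw [e2, e3, pow_succ]
        ring
      · have : m - j < j + 1 := by omega
        rw [Nat.choose_eq_zero_of_lt this]
        push_cast; ring
    · norm_num
      ring
  rw [h1, h3]
  linarith [h4]

private lemma fib_S : ∀ m, (Nat.fib (2 * m + 2) : ℤ) = S m := by
  intro m
  induction m using Nat.twoStepInduction with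
  | zero => norm_num [S, Finset.sum_range_one]
  | one => norm_num [S, Finset.sum_range_succ, Finset.sum_range_one]
  | more m ih1 ih2 =>
    have e1 : 2 * (m + 2) + 2 = 2 * m + 6 := by ring
    have e2 : 2 * (m + 1) + 2 = 2 * m + 4 := by ring
    rw [e2] at ih2
    rw [e1, S_rec, ← ih1, ← ih2]
    have a1 := Nat.fib_add_two (n := 2 * m + 4)
    have a2 := Nat.fib_add_two (n := 2 * m + 3)
    have a3 := Nat.fib_add_two (n := 2 * m + 2)
    simp only [show 2 * m + 4 + 2 = 2 * m + 6 from by ring, show 2 * m + 3 + 2 = 2 * m + 5 from by ring,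
      show 2 * m + 2 + 2 = 2 * m + 4 from by ring, show 2 * m + 3 + 1 = 2 * m + 4 from by ring,
      show 2 * m + 4 + 1 = 2 * m + 5 from by ring, show 2 * m + 2 + 1 = 2 * m + 3 from by ring] at a1 a2 a3
    omega

/-- `φ_{4n+4} = ∑_{i=0}^{n} C(2n+1-i, i) (-1)^i 3^{2n+1-2i}`. -/
theorem fib_4n4_formula (n : ℕ) :
    (Nat.fib (4 * n + 4) : ℤ) =
      ∑ i ∈ Finset.range (n + 1),
        (Nat.choose (2 * n + 1 - i) i : ℤ) * (-1) ^ i * 3 ^ (2 * n + 1 - 2 * i) := by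
  have e : 4 * n + 4 = 2 * (2 * n + 1) + 2 := by ring
  rw [e, fib_S, S]
  symm
  apply Finset.sum_subset
  · intro i hi
    simp only [Finset.mem_range] at *
    omega
  · intro i _ hi
    simp only [Finset.mem_range, not_lt] at hi
    have : 2 * n + 1 - i < i := by omega
    rw [Nat.choose_eq_zero_of_lt this]
    simp
end

section
/- Consider ℂ⁶ with coordinates (x₁,...,x₆), the polynomials H₁ = x₁x₂ + x₃x₄ + x₅x₆ - x₁x₃x₅ and H₂ = x₁x₂ + x₃x₄ + x₅x₆ - x₂x₄x₆, and the map τ₁: (x₁,...,x₆) ↦ (-x₂, -x₁, x₆, x₅, x₄ - x₁x₅, x₃ - x₂x₆). Then H₁ ∘ τ₁ = H₁ and H₂ ∘ τ₁ = H₂. -/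
/-- `H₁ = x₁x₂ + x₃x₄ + x₅x₆ - x₁x₃x₅` on `ℂ⁶`. -/
def H1 (x : Fin 6 → ℂ) : ℂ := x 0 * x 1 + x 2 * x 3 + x 4 * x 5 - x 0 * x 2 * x 4

/-- `H₂ = x₁x₂ + x₃x₄ + x₅x₆ - x₂x₄x₆` on `ℂ⁶`. -/
def H2 (x : Fin 6 → ℂ) : ℂ := x 0 * x 1 + x 2 * x 3 + x 4 * x 5 - x 1 * x 3 * x 5

/-- `τ₁ : (x₁,…,x₆) ↦ (-x₂, -x₁, x₆, x₅, x₄ - x₁x₅, x₃ - x₂x₆)`. -/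
def tau1 (x : Fin 6 → ℂ) : Fin 6 → ℂ :=
  ![-x 1, -x 0, x 5, x 4, x 3 - x 0 * x 4, x 2 - x 1 * x 5]

/-- The braid transformation `τ₁` preserves both `H₁` and `H₂`. -/
theorem tau1_preserves_H1_H2 (x : Fin 6 → ℂ) :
    H1 (tau1 x) = H1 x ∧ H2 (tau1 x) = H2 x := by
  have h0 : tau1 x 0 = -x 1 := rfl
  have h1 : tau1 x 1 = -x 0 := rfl
  have h2 : tau1 x 2 = x 5 := rfl
  have h3 : tau1 x 3 = x 4 := rfl
  have h4 : tau1 x 4 = x 3 - x 0 * x 4 := rfl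
  have h5 : tau1 x 5 = x 2 - x 1 * x 5 := rfl
  refine ⟨?_, ?_⟩ <;> · simp only [H1, H2, h0, h1, h2, h3, h4, h5]; ring
end
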